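/- arXiv:2210.04625 — 2 statements merged into one kernel-verified Lean document; each statement's English description precedes it below -/
import Mathlib

section
/- For a unit vector n ∈ ℝ³, the matrix exponential exp(θ n^∧) equals the Rodrigues formula cos θ · I + (1 - cos θ) · n nᵀ + sin θ · n^∧. -/
/-!
If `a ^ 3 = -a`, the powers of `a` are periodic up to sign from the first on: odd powers are
`±a` and nonzero even powers are `±a ^ 2`. The exponential series of `θ • a` therefore splits
into the sine series times `a` and `1` plus the shifted cosine series times `a ^ 2`. For a unit
vector, `(n^∧)² = n nᵀ - I`, which gives both `(n^∧)³ = -n^∧` and Rodrigues' formula.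
-/

open Matrix

/-- The skew-symmetric cross-product matrix of a vector in ℝ³. -/
def hat (v : Fin 3 → ℝ) : Matrix (Fin 3) (Fin 3) ℝ :=
  !![0, -v 2, v 1; v 2, 0, -v 0; -v 1, v 0, 0]

section PowThreeEqNeg

variable {A : Type*} [Ring A] {a : A}

theorem pow_add_three_of_pow_three_eq_neg (ha : a ^ 3 = -a) (k : ℕ) :
    a ^ (k + 3) = -a ^ (k + 1) := by
  rw [pow_add, ha, mul_neg, ← pow_succ]

theorem pow_two_mul_add_one_of_pow_three_eq_neg (ha : a ^ 3 = -a) (m : ℕ) :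
    a ^ (2 * m + 1) = (-1) ^ m * a := by
  induction m with
  | zero => simp
  | succ m ih =>
    rw [show 2 * (m + 1) + 1 = 2 * m + 3 by ring, pow_add_three_of_pow_three_eq_neg ha, ih,
      pow_succ, mul_neg_one, neg_mul]

theorem pow_two_mul_add_two_of_pow_three_eq_neg (ha : a ^ 3 = -a) (m : ℕ) :
    a ^ (2 * m + 2) = (-1) ^ m * a ^ 2 := by
  induction m with
  | zero => simp
  | succ m ih =>
    rw [show 2 * (m + 1) + 2 = (2 * m + 1) + 3 by ring, pow_add_three_of_pow_three_eq_neg ha,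
      ih, pow_succ (-1 : A), mul_neg_one, neg_mul]

end PowThreeEqNeg

section Rodrigues

variable {A : Type*} [Ring A] [Algebra ℝ A] [TopologicalSpace A] [ContinuousSMul ℝ A] {a : A}

theorem hasSum_exp_series_odd_of_pow_three_eq_neg (ha : a ^ 3 = -a) (θ : ℝ) :
    HasSum (fun k : ℕ => ((2 * k + 1).factorial⁻¹ : ℝ) • (θ • a) ^ (2 * k + 1))
      (Real.sin θ • a) := by
  convert (Real.hasSum_sin θ).smul_const a using 2 with k
  rw [smul_pow, pow_two_mul_add_one_of_pow_three_eq_neg ha, ← neg_one_smul ℝ (1 : A), smul_pow,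
    one_pow, smul_one_mul, smul_smul, smul_smul]
  ring_nf

theorem hasSum_exp_series_even_of_pow_three_eq_neg [IsTopologicalAddGroup A] (ha : a ^ 3 = -a)
    (θ : ℝ) :
    HasSum (fun k : ℕ => ((2 * k).factorial⁻¹ : ℝ) • (θ • a) ^ (2 * k))
      (1 + (1 - Real.cos θ) • a ^ 2) := by
  have hcos := ((hasSum_nat_add_iff' 1).mpr (Real.hasSum_cos θ)).neg.smul_const (a ^ 2)
  simp only [Finset.range_one, Finset.sum_singleton, mul_zero, pow_zero, Nat.factorial_zero,
    Nat.cast_one, div_one, mul_one, neg_sub] at hcos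
  -- the zeroth term `1` is the only even term that is not a multiple of `a ^ 2`
  refine (hasSum_nat_add_iff' 1).mp ?_
  simp only [Finset.range_one, Finset.sum_singleton, mul_zero, pow_zero, Nat.factorial_zero,
    Nat.cast_one, inv_one, one_smul]
  convert hcos using 1
  · rfl
  · ext k
    rw [show 2 * (k + 1) = 2 * k + 2 by ring, smul_pow, pow_two_mul_add_two_of_pow_three_eq_neg ha,
      ← neg_one_smul ℝ (1 : A), smul_pow, one_pow, smul_one_mul, smul_smul, smul_smul]
    ring_nf
  · exact add_sub_cancel_left 1 _

theorem exp_smul_of_pow_three_eq_neg [IsTopologicalRing A] [T2Space A] (ha : a ^ 3 = -a)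
    (θ : ℝ) :
    NormedSpace.exp (θ • a) = 1 + Real.sin θ • a + (1 - Real.cos θ) • a ^ 2 := by
  have h := HasSum.even_add_odd (f := fun k : ℕ => (k.factorial⁻¹ : ℝ) • (θ • a) ^ k)
    (hasSum_exp_series_even_of_pow_three_eq_neg ha θ)
    (hasSum_exp_series_odd_of_pow_three_eq_neg ha θ)
  rw [congrFun (NormedSpace.exp_eq_tsum ℝ) (θ • a), h.tsum_eq]
  abel

end Rodrigues

theorem vecMulVec_mul_hat (n : Fin 3 → ℝ) : vecMulVec n n * hat n = 0 := by
  ext i j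
  fin_cases i <;> fin_cases j <;>
    simp [hat, mul_apply, Fin.sum_univ_three, vecMulVec] <;> ring

theorem hat_sq (n : Fin 3 → ℝ) (hn : n 0 ^ 2 + n 1 ^ 2 + n 2 ^ 2 = 1) :
    hat n ^ 2 = vecMulVec n n - 1 := by
  ext i j
  fin_cases i <;> fin_cases j <;>
    simp [hat, sq, mul_apply, Fin.sum_univ_three, vecMulVec] <;>
    first | ring1 | linear_combination -hn

theorem hat_pow_three (n : Fin 3 → ℝ) (hn : n 0 ^ 2 + n 1 ^ 2 + n 2 ^ 2 = 1) :
    hat n ^ 3 = -hat n := by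
  rw [pow_succ, hat_sq n hn, sub_mul, vecMulVec_mul_hat, one_mul, zero_sub]

/-- Rodrigues formula: exp(θ n^∧) = cos θ · I + (1 - cos θ) · n nᵀ + sin θ · n^∧
for a unit vector n. -/
theorem stmt_3 (n : Fin 3 → ℝ) (hn : n 0 ^ 2 + n 1 ^ 2 + n 2 ^ 2 = 1) (θ : ℝ) :
    NormedSpace.exp (θ • hat n)
      = Real.cos θ • (1 : Matrix (Fin 3) (Fin 3) ℝ)
        + (1 - Real.cos θ) • Matrix.vecMulVec n n + Real.sin θ • hat n := by
  rw [exp_smul_of_pow_three_eq_neg (hat_pow_three n hn), hat_sq n hn]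
  module
end

section
/- Let Φ be the standard normal CDF, σ > 0, ε₀ ~ N(0, σ²) on ℝ, and q(y|x;ε) = E_ε[p(y | φ(x,ε))] for a measurable p taking values in [0,1]. If q(y_A|x;ε₀) ≥ p_A > p_B ≥ max_{y≠y_A} q(y|x;ε₀) and |α| < (σ/2)(Φ⁻¹(p_A) - Φ⁻¹(p_B)), then q(y_A|x; α+ε₀) > max_{y≠y_A} q(y|x; α+ε₀). -/
/-!
Rescaling by `σ` reduces everything to the standard Gaussian. By the Neyman–Pearson lemma, among
all tests `g : ℝ → [0, 1]` with a given mean under `N(0, 1)`, the half-line indicator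
`𝟙 (-∞, z]` has the smallest mean under `N(a, 1)` for `a ≥ 0`, because the likelihood ratio
`exp (a x - a² / 2)` is increasing in `x`. Hence `Φ z ≤ E₀ g` forces `Φ (z - |a|) ≤ E_a g`, and
applied to `1 - g`, `E₀ g ≤ Φ z` forces `E_a g ≤ Φ (z + |a|)`. With `z = Φ⁻¹ p_A` for the top
class and `z = Φ⁻¹ p_B` for any other one, the margin condition `2 |a| < Φ⁻¹ p_A - Φ⁻¹ p_B`
separates the two bounds.
-/

open MeasureTheory ProbabilityTheory Set Function

section Bounded

variable {α : Type*} [MeasurableSpace α] {μ : Measure α} [IsProbabilityMeasure μ] {g : α → ℝ}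

lemma integrable_of_mem_Icc (hg : Measurable g) (hg01 : ∀ x, g x ∈ Icc 0 1) : Integrable g μ :=
  .of_bound hg.aestronglyMeasurable 1
    (ae_of_all _ fun x ↦ by simpa [abs_of_nonneg (hg01 x).1] using (hg01 x).2)

lemma integral_le_one_of_mem_Icc (hg : Measurable g) (hg01 : ∀ x, g x ∈ Icc 0 1) :
    ∫ x, g x ∂μ ≤ 1 :=
  (integral_mono (integrable_of_mem_Icc hg hg01) (integrable_const 1) fun x ↦ (hg01 x).2).trans_eq
    (by simp)

lemma integral_one_sub_of_mem_Icc (hg : Measurable g) (hg01 : ∀ x, g x ∈ Icc 0 1) :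
    ∫ x, 1 - g x ∂μ = 1 - ∫ x, g x ∂μ := by
  rw [integral_sub (integrable_const 1) (integrable_of_mem_Icc hg hg01)]
  simp

end Bounded

lemma neymanPearson_integral_le {α : Type*} [MeasurableSpace α] {ν : Measure α}
    {p₀ p₁ g h : α → ℝ} {c : ℝ} (hc : 0 ≤ c)
    (hp₀g : Integrable (fun x ↦ p₀ x * g x) ν) (hp₀h : Integrable (fun x ↦ p₀ x * h x) ν)
    (hp₁g : Integrable (fun x ↦ p₁ x * g x) ν) (hp₁h : Integrable (fun x ↦ p₁ x * h x) ν)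
    (htest : ∀ x, 0 ≤ (g x - h x) * (p₁ x - c * p₀ x))
    (h₀ : ∫ x, p₀ x * h x ∂ν ≤ ∫ x, p₀ x * g x ∂ν) :
    ∫ x, p₁ x * h x ∂ν ≤ ∫ x, p₁ x * g x ∂ν := by
  have hsplit : ∫ x, (g x - h x) * (p₁ x - c * p₀ x) ∂ν
      = (∫ x, p₁ x * g x ∂ν - ∫ x, p₁ x * h x ∂ν)
        - c * (∫ x, p₀ x * g x ∂ν - ∫ x, p₀ x * h x ∂ν) := by
    rw [← integral_sub hp₁g hp₁h, ← integral_sub hp₀g hp₀h, ← integral_const_mul, ← integral_sub]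
    · congr 1 with x
      ring
    · exact hp₁g.sub hp₁h
    · exact (hp₀g.sub hp₀h).const_mul c
  have : 0 ≤ ∫ x, (g x - h x) * (p₁ x - c * p₀ x) ∂ν := integral_nonneg htest
  nlinarith [mul_nonneg hc (sub_nonneg.2 h₀)]

section CDF

variable {μ : Measure ℝ} [IsProbabilityMeasure μ]

lemma continuous_cdf [NullSingletonClass μ] : Continuous (cdf μ) := by
  refine continuous_iff_continuousAt.2 fun x ↦ ?_
  rw [(cdf μ).mono.continuousAt_iff_leftLim_eq_rightLim, StieltjesFunction.rightLim_eq]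
  have hjump : ENNReal.ofReal (cdf μ x - leftLim (cdf μ) x) = 0 := by
    rw [← StieltjesFunction.measure_singleton, measure_cdf, measure_singleton]
  have := (cdf μ).mono.leftLim_le le_rfl (x := x)
  rw [ENNReal.ofReal_eq_zero] at hjump
  linarith

lemma strictMono_cdf (hμ : volume ≪ μ) : StrictMono (cdf μ) := by
  intro a b hab
  have hpos : μ (Ioc a b) ≠ 0 := fun h ↦ by simpa [hab.not_ge] using hμ h
  rw [← measure_cdf (μ := μ), StieltjesFunction.measure_Ioc, ne_eq, ENNReal.ofReal_eq_zero,
    not_le, sub_pos] at hpos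
  exact hpos

lemma cdf_invFun_cdf [NullSingletonClass μ] {p : ℝ} (hp : p ∈ Ioo 0 1) :
    cdf μ (invFun (cdf μ) p) = p := by
  refine invFun_eq (mem_range_of_exists_le_of_exists_ge continuous_cdf ?_ ?_)
  · exact ((tendsto_cdf_atBot μ).eventually_le_const hp.1).exists
  · exact ((tendsto_cdf_atTop μ).eventually_const_le hp.2).exists

lemma cdf_neg [NullSingletonClass μ] (hμ : μ.map (fun x ↦ -x) = μ) (x : ℝ) :
    cdf μ (-x) = 1 - cdf μ x := by
  have hIci : μ.real (Iic (-x)) = μ.real (Ici x) := by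
    conv_lhs => rw [← hμ]
    rw [map_measureReal_apply measurable_neg measurableSet_Iic]
    congr 1
    ext y
    simp
  rw [cdf_eq_real, cdf_eq_real, hIci, ← measureReal_congr Ioi_ae_eq_Ici, ← compl_Iic,
    measureReal_compl measurableSet_Iic, probReal_univ]

end CDF

section Gaussian

variable {m : ℝ} {v : NNReal}

lemma integral_gaussianReal_comp_const_add (y : ℝ) (g : ℝ → ℝ) :
    ∫ x, g (y + x) ∂gaussianReal m v = ∫ x, g x ∂gaussianReal (m + y) v := by
  rw [← gaussianReal_map_const_add, (measurableEmbedding_addLeft y).integral_map]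

lemma integral_gaussianReal_comp_neg (g : ℝ → ℝ) :
    ∫ x, g (-x) ∂gaussianReal m v = ∫ x, g x ∂gaussianReal (-m) v := by
  rw [← gaussianReal_map_neg, measurableEmbedding_neg.integral_map]

lemma integral_gaussianReal_eq_integral_comp_mul {σ : ℝ} (hσ : σ ≠ 0) (g : ℝ → ℝ) :
    ∫ x, g x ∂gaussianReal m (σ ^ 2).toNNReal = ∫ x, g (σ * x) ∂gaussianReal (m / σ) 1 := by
  have hmap : (gaussianReal (m / σ) 1).map (σ * ·) = gaussianReal m (σ ^ 2).toNNReal := by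
    rw [gaussianReal_map_const_mul, mul_div_cancel₀ _ hσ]
    congr 1
    ext
    simp [sq_nonneg]
  rw [← hmap, (measurableEmbedding_mulLeft₀ hσ).integral_map]

lemma gaussianReal_one_real_Iic (m t : ℝ) :
    (gaussianReal m 1).real (Iic t) = cdf (gaussianReal 0 1) (t - m) := by
  rw [cdf_eq_real, ← zero_add m, ← gaussianReal_map_add_const,
    map_measureReal_apply (measurable_add_const m) measurableSet_Iic, zero_add]
  congr 1
  ext
  simp [le_sub_iff_add_le]

lemma gaussianPDFReal_one_eq_exp_mul (a x : ℝ) :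
    gaussianPDFReal a 1 x = Real.exp (a * x - a ^ 2 / 2) * gaussianPDFReal 0 1 x := by
  simp only [gaussianPDFReal, NNReal.coe_one, mul_one, sub_zero]
  rw [mul_left_comm, ← Real.exp_add]
  ring_nf

lemma integrable_gaussianPDFReal_mul {g : ℝ → ℝ} (hg : Measurable g) (hg01 : ∀ x, g x ∈ Icc 0 1) :
    Integrable (fun x ↦ gaussianPDFReal m v x * g x) :=
  (integrable_gaussianPDFReal m v).mul_bdd hg.aestronglyMeasurable
    (ae_of_all _ fun x ↦ by simpa [abs_of_nonneg (hg01 x).1] using (hg01 x).2)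

lemma integral_gaussianReal_pos_iff (hv : v ≠ 0) (m' : ℝ) {g : ℝ → ℝ} (hg : Measurable g)
    (hg01 : ∀ x, g x ∈ Icc 0 1) :
    0 < ∫ x, g x ∂gaussianReal m v ↔ 0 < ∫ x, g x ∂gaussianReal m' v := by
  have hg0 : 0 ≤ g := fun x ↦ (hg01 x).1
  rw [integral_pos_iff_support_of_nonneg hg0 (integrable_of_mem_Icc hg hg01),
    integral_pos_iff_support_of_nonneg hg0 (integrable_of_mem_Icc hg hg01),
    pos_iff_ne_zero, pos_iff_ne_zero]
  exact not_congr ⟨fun h ↦ gaussianReal_absolutelyContinuous m' hv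
    (gaussianReal_absolutelyContinuous' m hv h), fun h ↦ gaussianReal_absolutelyContinuous m hv
    (gaussianReal_absolutelyContinuous' m' hv h)⟩

lemma integral_gaussianReal_lt_one_iff (hv : v ≠ 0) (m' : ℝ) {g : ℝ → ℝ} (hg : Measurable g)
    (hg01 : ∀ x, g x ∈ Icc 0 1) :
    ∫ x, g x ∂gaussianReal m v < 1 ↔ ∫ x, g x ∂gaussianReal m' v < 1 := by
  have h := integral_gaussianReal_pos_iff (m := m) hv m' (g := fun x ↦ 1 - g x)
    (measurable_const.sub hg) fun x ↦ Icc.one_sub_mem (hg01 x)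
  rwa [integral_one_sub_of_mem_Icc hg hg01, integral_one_sub_of_mem_Icc hg hg01, sub_pos,
    sub_pos] at h

end Gaussian

section StandardGaussian

local notation "Φ" => cdf (gaussianReal 0 1)

lemma cdf_sub_le_integral_gaussianReal_of_nonneg {g : ℝ → ℝ} (hg : Measurable g)
    (hg01 : ∀ x, g x ∈ Icc 0 1) {a z : ℝ} (ha : 0 ≤ a)
    (hz : Φ z ≤ ∫ x, g x ∂gaussianReal 0 1) : Φ (z - a) ≤ ∫ x, g x ∂gaussianReal a 1 := by
  set h := (Iic z).indicator (1 : ℝ → ℝ)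
  have hh : Measurable h := measurable_const.indicator measurableSet_Iic
  have hh01 : ∀ x, h x ∈ Icc 0 1 := fun x ↦ by
    by_cases hx : x ≤ z <;> simp [h, hx]
  have integral_g (m : ℝ) : ∫ x, g x ∂gaussianReal m 1 = ∫ x, gaussianPDFReal m 1 x * g x :=
    integral_gaussianReal_eq_integral_smul one_ne_zero
  have integral_h (m : ℝ) : ∫ x, gaussianPDFReal m 1 x * h x = Φ (z - m) := by
    rw [← gaussianReal_one_real_Iic, ← integral_indicator_one measurableSet_Iic]
    exact (integral_gaussianReal_eq_integral_smul one_ne_zero).symm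
  rw [integral_g, ← integral_h]
  refine neymanPearson_integral_le (Real.exp_pos (a * z - a ^ 2 / 2)).le
    (integrable_gaussianPDFReal_mul hg hg01) (integrable_gaussianPDFReal_mul hh hh01)
    (integrable_gaussianPDFReal_mul hg hg01) (integrable_gaussianPDFReal_mul hh hh01)
    (fun x ↦ ?_) (by rwa [integral_h, ← integral_g, sub_zero])
  rw [gaussianPDFReal_one_eq_exp_mul, ← sub_mul, ← mul_assoc]
  refine mul_nonneg ?_ (gaussianPDFReal_nonneg 0 1 x)
  by_cases hx : x ≤ z
  · refine mul_nonneg_of_nonpos_of_nonpos (by simpa [h, hx] using (hg01 x).2) ?_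
    exact sub_nonpos.2 (Real.exp_le_exp.2 (by nlinarith))
  · refine mul_nonneg (by simpa [h, hx] using (hg01 x).1) ?_
    exact sub_nonneg.2 (Real.exp_le_exp.2 (by nlinarith))

lemma cdf_sub_abs_le_integral_gaussianReal {g : ℝ → ℝ} (hg : Measurable g)
    (hg01 : ∀ x, g x ∈ Icc 0 1) (a : ℝ) {z : ℝ}
    (hz : Φ z ≤ ∫ x, g x ∂gaussianReal 0 1) : Φ (z - |a|) ≤ ∫ x, g x ∂gaussianReal a 1 := by
  rcases le_or_gt 0 a with ha | ha
  · rw [abs_of_nonneg ha]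
    exact cdf_sub_le_integral_gaussianReal_of_nonneg hg hg01 ha hz
  · have hreflect (m : ℝ) : ∫ x, g x ∂gaussianReal m 1 = ∫ x, g (-x) ∂gaussianReal (-m) 1 := by
      rw [integral_gaussianReal_comp_neg, neg_neg]
    rw [abs_of_neg ha, hreflect]
    refine cdf_sub_le_integral_gaussianReal_of_nonneg (g := fun x ↦ g (-x))
      (hg.comp measurable_neg) (fun x ↦ hg01 (-x)) (neg_nonneg.2 ha.le) ?_
    rwa [integral_gaussianReal_comp_neg, neg_zero]

lemma integral_gaussianReal_le_cdf_add_abs {g : ℝ → ℝ} (hg : Measurable g)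
    (hg01 : ∀ x, g x ∈ Icc 0 1) (a : ℝ) {z : ℝ}
    (hz : ∫ x, g x ∂gaussianReal 0 1 ≤ Φ z) : ∫ x, g x ∂gaussianReal a 1 ≤ Φ (z + |a|) := by
  have : NullSingletonClass (gaussianReal 0 1) := nullSingletonClass_gaussianReal one_ne_zero
  have hΦ_neg (x : ℝ) : Φ (-x) = 1 - Φ x :=
    cdf_neg (by simpa using gaussianReal_map_neg (μ := 0) (v := 1)) x
  have h := cdf_sub_abs_le_integral_gaussianReal (g := fun x ↦ 1 - g x)
    (measurable_const.sub hg) (fun x ↦ Icc.one_sub_mem (hg01 x)) a (z := -z)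
    (by rw [integral_one_sub_of_mem_Icc hg hg01, hΦ_neg]; linarith)
  rw [integral_one_sub_of_mem_Icc hg hg01, show -z - |a| = -(z + |a|) by ring, hΦ_neg] at h
  linarith

lemma integral_gaussianReal_lt_of_margin {gA gB : ℝ → ℝ} (hgA : Measurable gA)
    (hgB : Measurable gB) (hgA01 : ∀ x, gA x ∈ Icc 0 1) (hgB01 : ∀ x, gB x ∈ Icc 0 1)
    {pA pB a : ℝ} (hA : pA ≤ ∫ x, gA x ∂gaussianReal 0 1) (hAB : pB < pA)
    (hB : ∫ x, gB x ∂gaussianReal 0 1 ≤ pB) (ha : |a| < (invFun Φ pA - invFun Φ pB) / 2) :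
    ∫ x, gB x ∂gaussianReal a 1 < ∫ x, gA x ∂gaussianReal a 1 := by
  have hpB : 0 ≤ pB := (integral_nonneg fun x ↦ (hgB01 x).1).trans hB
  have hpA : pA ≤ 1 := hA.trans (integral_le_one_of_mem_Icc hgA hgA01)
  -- at `p = 0` and `p = 1` the value `invFun Φ p` is junk; there the conclusion instead follows
  -- from the equivalence of all the Gaussian measures `gaussianReal m 1`
  rcases hpB.eq_or_lt with rfl | hpB
  · have hBa := (integral_gaussianReal_pos_iff one_ne_zero a hgB hgB01).not.1 hB.not_gt
    have hAa := (integral_gaussianReal_pos_iff one_ne_zero a hgA hgA01).1 (hAB.trans_le hA)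
    linarith
  rcases hpA.eq_or_lt with rfl | hpA
  · have hAa := (integral_gaussianReal_lt_one_iff one_ne_zero a hgA hgA01).not.1 hA.not_gt
    have hBa := (integral_gaussianReal_lt_one_iff one_ne_zero a hgB hgB01).1 (hB.trans_lt hAB)
    linarith
  have : NullSingletonClass (gaussianReal 0 1) := nullSingletonClass_gaussianReal one_ne_zero
  have hΦA := cdf_invFun_cdf (μ := gaussianReal 0 1) ⟨hpB.trans hAB, hpA⟩
  have hΦB := cdf_invFun_cdf (μ := gaussianReal 0 1) ⟨hpB, hAB.trans hpA⟩
  calc ∫ x, gB x ∂gaussianReal a 1 ≤ Φ (invFun Φ pB + |a|) :=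
        integral_gaussianReal_le_cdf_add_abs hgB hgB01 a (by rwa [hΦB])
    _ < Φ (invFun Φ pA - |a|) :=
        strictMono_cdf (gaussianReal_absolutelyContinuous' 0 one_ne_zero) (by linarith)
    _ ≤ ∫ x, gA x ∂gaussianReal a 1 :=
        cdf_sub_abs_le_integral_gaussianReal hgA hgA01 a (by rwa [hΦA])

end StandardGaussian

/-- One-dimensional Gaussian randomized smoothing certification: if the smoothed class
probabilities satisfy q(y_A|x;ε₀) ≥ p_A > p_B ≥ max_{y≠y_A} q(y|x;ε₀) with ε₀ ~ N(0,σ²),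
and |α| < (σ/2)(Φ⁻¹(p_A) − Φ⁻¹(p_B)), then
q(y_A|x; α+ε₀) > max_{y≠y_A} q(y|x; α+ε₀). -/
theorem stmt_11 {Y : Type*} (f : Y → ℝ → ℝ)
    (hmeas : ∀ y, Measurable (f y))
    (hrange : ∀ y ε, f y ε ∈ Set.Icc (0 : ℝ) 1)
    (σ : ℝ) (hσ : 0 < σ)
    (μ : Measure ℝ) (hμ : μ = gaussianReal 0 (Real.toNNReal (σ ^ 2)))
    (Φ : ℝ → ℝ) (hΦ : Φ = fun x => cdf (gaussianReal 0 1) x)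
    (Φinv : ℝ → ℝ) (hΦinv : Φinv = Function.invFun Φ)
    (yA : Y) (pA pB : ℝ)
    (hA : pA ≤ ∫ ε, f yA ε ∂μ)
    (hAB : pB < pA)
    (hB : ∀ y, y ≠ yA → ∫ ε, f y ε ∂μ ≤ pB)
    (α : ℝ) (hα : |α| < σ / 2 * (Φinv pA - Φinv pB)) :
    ∀ y, y ≠ yA → ∫ ε, f y (α + ε) ∂μ < ∫ ε, f yA (α + ε) ∂μ := by
  intro y hy
  subst hμ hΦ hΦinv
  have hrescale (g : ℝ → ℝ) (β : ℝ) : ∫ ε, g (β + ε) ∂gaussianReal 0 (σ ^ 2).toNNReal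
      = ∫ x, g (σ * x) ∂gaussianReal (β / σ) 1 := by
    rw [integral_gaussianReal_comp_const_add, zero_add,
      integral_gaussianReal_eq_integral_comp_mul hσ.ne']
  have hunshifted (g : ℝ → ℝ) : ∫ ε, g ε ∂gaussianReal 0 (σ ^ 2).toNNReal
      = ∫ x, g (σ * x) ∂gaussianReal 0 1 := by
    simpa using hrescale g 0
  rw [hrescale, hrescale]
  refine integral_gaussianReal_lt_of_margin ((hmeas yA).comp (measurable_const_mul σ))
    ((hmeas y).comp (measurable_const_mul σ)) (fun x ↦ hrange yA _) (fun x ↦ hrange y _)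
    (hunshifted (f yA) ▸ hA) hAB (hunshifted (f y) ▸ hB y hy) ?_
  rw [abs_div, abs_of_pos hσ, div_lt_iff₀ hσ]
  linarith
end
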